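/- In the extended union-intersection type system with unrestricted type formation and the supplementary subtyping axioms, every type A is equivalent (A ≤_ext T and T ≤_ext A) to a type T in disjunctive normal form conforming to the restricted grammar: a finite union of finite intersections of raw types, where raw types have the shape α or S → T with S an intersection and T a union. -/

import Mathlib

/-- Unrestricted union-intersection types A ::= α | A→A | ⋂A | ⋃A. -/
inductive ATy : Type
  | atom : ℕ → ATy
  | arrow : ATy → ATy → ATy
  | inter : List ATy → ATy
  | union : List ATy → ATy

/-- The extended subtype relation ≤_ext: the standard union-intersection
rules, reflexivity, transitivity, associativity/commutativity of ⋂ and ⋃,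
and the supplementary axioms (sup₁) and (sup₂). -/
inductive SubE : ATy → ATy → Prop
  | refl (A : ATy) : SubE A A
  | trans {A B C} : SubE A B → SubE B C → SubE A C
  | arrow {A A' B B'} : SubE A' A → SubE B B' → SubE (.arrow A B) (.arrow A' B')
  -- intersection projection and pairing
  | interProj {A B : ATy} {l : List ATy} : SubE A B → SubE (.inter (A :: l)) B
  | interPair {A : ATy} {l : List ATy} : (∀ B ∈ l, SubE A B) → SubE A (.inter l)
  -- union injection and copairing
  | unionInj {A B : ATy} {l : List ATy} : SubE A B → SubE A (.union (B :: l))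
  | unionCopair {l : List ATy} {B : ATy} : (∀ A ∈ l, SubE A B) → SubE (.union l) B
  -- associativity and commutativity of intersections and unions
  | interPerm {l l' : List ATy} : l.Perm l' → SubE (.inter l) (.inter l')
  | interFlat {l l' : List ATy} : SubE (.inter (ATy.inter l :: l')) (.inter (l ++ l'))
  | interUnflat {l l' : List ATy} : SubE (.inter (l ++ l')) (.inter (ATy.inter l :: l'))
  | unionPerm {l l' : List ATy} : l.Perm l' → SubE (.union l) (.union l')
  | unionFlat {l l' : List ATy} : SubE (.union (ATy.union l :: l')) (.union (l ++ l'))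
  | unionUnflat {l l' : List ATy} : SubE (.union (l ++ l')) (.union (ATy.union l :: l'))
  -- supplementary axioms
  | sup1 {A : ATy} {l : List ATy} :
      SubE (.inter [A, .union l]) (.union (l.map fun B => ATy.inter [A, B]))
  | sup2 {l : List ATy} {B : ATy} :
      SubE (.inter (l.map fun A => ATy.arrow A B)) (.arrow (.union l) B)

mutual
/-- Raw types of the restricted grammar R ::= α | S → T. -/
inductive IsR : ATy → Prop
  | atom (a : ℕ) : IsR (.atom a)
  | arrow {S T : ATy} : IsS S → IsT T → IsR (.arrow S T)
/-- Subsidiary types S ::= ⋂R. -/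
inductive IsS : ATy → Prop
  | inter {l : List ATy} : (∀ R ∈ l, IsR R) → IsS (.inter l)
/-- Restricted types T ::= ⋃S (disjunctive normal forms). -/
inductive IsT : ATy → Prop
  | union {l : List ATy} : (∀ S ∈ l, IsS S) → IsT (.union l)
end

/-!
Normalise by structural recursion. For `A → B` with normal forms `⋃ᵢ Sᵢ` and `T`,
contravariance and (sup₂) identify `(⋃ᵢ Sᵢ) → T` with the single conjunct `⋂ᵢ (Sᵢ → T)` of
raw types. A union of normal forms is flattened into one, and an intersection of normal forms
is brought back to normal form by distributing `∩` over `∪`, which is where (sup₁) is needed.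
-/

namespace SubE

variable {A A' B B' : ATy} {l l' : List ATy}

theorem inter_le_of_mem (h : A ∈ l) : SubE (.inter l) A := by
  obtain ⟨s, t, rfl⟩ := List.append_of_mem h
  exact trans (interPerm List.perm_middle) (interProj (refl A))

theorem le_union_of_mem (h : A ∈ l) : SubE A (.union l) := by
  obtain ⟨s, t, rfl⟩ := List.append_of_mem h
  exact trans (unionInj (refl A)) (unionPerm List.perm_middle.symm)

theorem inter_mono (h : ∀ B ∈ l', ∃ A ∈ l, SubE A B) : SubE (.inter l) (.inter l') :=
  interPair fun B hB =>
    let ⟨_, hA, hAB⟩ := h B hB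
    trans (inter_le_of_mem hA) hAB

theorem union_mono (h : ∀ A ∈ l, ∃ B ∈ l', SubE A B) : SubE (.union l) (.union l') :=
  unionCopair fun A hA =>
    let ⟨_, hB, hAB⟩ := h A hA
    trans hAB (le_union_of_mem hB)

theorem inter_pair_mono (hA : SubE A A') (hB : SubE B B') :
    SubE (.inter [A, B]) (.inter [A', B']) :=
  interPair <| by simpa using ⟨interProj hA, trans (inter_le_of_mem (by simp)) hB⟩

theorem inter_cons_le_pair : SubE (.inter (A :: l)) (.inter [A, .inter l]) :=
  interPair <| List.forall_mem_cons.2 ⟨interProj (refl A), List.forall_mem_singleton.2 <|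
    inter_mono fun B hB => ⟨B, List.mem_cons_of_mem A hB, refl B⟩⟩

theorem inter_pair_le_cons : SubE (.inter [A, .inter l]) (.inter (A :: l)) :=
  interPair <| List.forall_mem_cons.2
    ⟨interProj (refl A), fun _ hB => trans (inter_le_of_mem (by simp)) (inter_le_of_mem hB)⟩

theorem inter_union_le_union_inter :
    SubE (.inter [.union l, A]) (.union (l.map fun B => .inter [B, A])) :=
  trans (interPerm (.swap _ _ _)) <| trans sup1 <| union_mono <| List.forall_mem_map.2
    fun _ hB => ⟨_, List.mem_map_of_mem hB, interPerm (.swap _ _ _)⟩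

theorem inter_pair_le_append {a b : List ATy} :
    SubE (.inter [.inter a, .inter b]) (.inter (a ++ b)) :=
  interPair fun _ hC => (List.mem_append.1 hC).elim
    (fun hC => trans (inter_le_of_mem (by simp)) (inter_le_of_mem hC))
    (fun hC => trans (inter_le_of_mem (by simp)) (inter_le_of_mem hC))

end SubE

namespace ATy

structure Equiv (A B : ATy) : Prop where
  le : SubE A B
  ge : SubE B A

infix:50 " ≈ₑ " => Equiv

namespace Equiv

variable {A A' B B' C : ATy} {l : List ATy}

theorem refl (A : ATy) : A ≈ₑ A := ⟨.refl A, .refl A⟩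

theorem symm (h : A ≈ₑ B) : B ≈ₑ A := ⟨h.ge, h.le⟩

theorem trans (h : A ≈ₑ B) (h' : B ≈ₑ C) : A ≈ₑ C := ⟨h.le.trans h'.le, h'.ge.trans h.ge⟩

theorem arrow (hA : A ≈ₑ A') (hB : B ≈ₑ B') : .arrow A B ≈ₑ .arrow A' B' :=
  ⟨.arrow hA.ge hB.le, .arrow hA.le hB.ge⟩

theorem inter_pair (hA : A ≈ₑ A') (hB : B ≈ₑ B') : .inter [A, B] ≈ₑ .inter [A', B'] :=
  ⟨.inter_pair_mono hA.le hB.le, .inter_pair_mono hA.ge hB.ge⟩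

theorem inter_singleton : .inter [A] ≈ₑ A :=
  ⟨.interProj (.refl A), .interPair <| by simpa using .refl A⟩

theorem union_singleton : .union [A] ≈ₑ A :=
  ⟨.unionCopair <| by simpa using .refl A, .unionInj (.refl A)⟩

theorem inter_cons : .inter (A :: l) ≈ₑ .inter [A, .inter l] :=
  ⟨.inter_cons_le_pair, .inter_pair_le_cons⟩

theorem inter_map {f : ATy → ATy} (h : ∀ B ∈ l, B ≈ₑ f B) : .inter l ≈ₑ .inter (l.map f) :=
  ⟨.inter_mono <| List.forall_mem_map.2 fun B hB => ⟨B, hB, (h B hB).le⟩,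
    .inter_mono fun B hB => ⟨f B, List.mem_map_of_mem hB, (h B hB).ge⟩⟩

theorem union_map {f : ATy → ATy} (h : ∀ B ∈ l, B ≈ₑ f B) : .union l ≈ₑ .union (l.map f) :=
  ⟨.union_mono fun B hB => ⟨f B, List.mem_map_of_mem hB, (h B hB).le⟩,
    .union_mono <| List.forall_mem_map.2 fun B hB => ⟨B, hB, (h B hB).ge⟩⟩

end Equiv

def dnf (d : List (List ATy)) : ATy := .union (d.map .inter)

def IsRawDNF (d : List (List ATy)) : Prop := ∀ a ∈ d, ∀ R ∈ a, IsR R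

theorem IsRawDNF.isT_dnf {d : List (List ATy)} (h : IsRawDNF d) : IsT (dnf d) :=
  .union <| List.forall_mem_map.2 fun a ha => .inter (h a ha)

def dnfAnd (d e : List (List ATy)) : List (List ATy) := d.flatMap fun a => e.map (a ++ ·)

theorem mem_dnfAnd {d e : List (List ATy)} {c : List ATy} :
    c ∈ dnfAnd d e ↔ ∃ a ∈ d, ∃ b ∈ e, a ++ b = c := by
  simp [dnfAnd]

theorem IsRawDNF.dnfAnd {d e : List (List ATy)} (hd : IsRawDNF d) (he : IsRawDNF e) :
    IsRawDNF (dnfAnd d e) := by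
  intro c hc
  obtain ⟨a, ha, b, hb, rfl⟩ := mem_dnfAnd.1 hc
  exact List.forall_mem_append.2 ⟨hd a ha, he b hb⟩

theorem IsRawDNF.foldr_dnfAnd {ds : List (List (List ATy))} (h : ∀ d ∈ ds, IsRawDNF d) :
    IsRawDNF (ds.foldr ATy.dnfAnd [[]]) := by
  induction ds with
  | nil => simp [IsRawDNF]
  | cons d ds ih =>
    rw [List.forall_mem_cons] at h
    exact h.1.dnfAnd (ih h.2)

theorem IsRawDNF.flatten {ds : List (List (List ATy))} (h : ∀ d ∈ ds, IsRawDNF d) :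
    IsRawDNF ds.flatten := by
  intro a ha
  obtain ⟨d, hd, ha⟩ := List.mem_flatten.1 ha
  exact h d hd a ha

theorem IsRawDNF.arrow {d e : List (List ATy)} (hd : IsRawDNF d) (he : IsRawDNF e) :
    IsRawDNF [d.map fun a => .arrow (.inter a) (dnf e)] := by
  simpa [IsRawDNF] using fun a ha => IsR.arrow (.inter (hd a ha)) he.isT_dnf

section Equivalences

variable {d e : List (List ATy)}

theorem dnfAnd_equiv : dnf (dnfAnd d e) ≈ₑ .inter [dnf d, dnf e] := by
  constructor
  · refine .unionCopair <| List.forall_mem_map.2 fun c hc => ?_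
    obtain ⟨a, ha, b, hb, rfl⟩ := mem_dnfAnd.1 hc
    refine .interPair <| List.forall_mem_cons.2 ⟨?_, List.forall_mem_singleton.2 ?_⟩
    · exact (SubE.inter_mono fun x hx => ⟨x, List.mem_append_left b hx, .refl x⟩).trans
        (SubE.le_union_of_mem (List.mem_map_of_mem ha))
    · exact (SubE.inter_mono fun x hx => ⟨x, List.mem_append_right a hx, .refl x⟩).trans
        (SubE.le_union_of_mem (List.mem_map_of_mem hb))
  · refine SubE.inter_union_le_union_inter.trans <| .unionCopair ?_
    simp only [List.map_map, List.forall_mem_map, Function.comp_apply]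
    intro a ha
    refine SubE.sup1.trans <| .unionCopair ?_
    simp only [List.map_map, List.forall_mem_map, Function.comp_apply]
    intro b hb
    exact SubE.inter_pair_le_append.trans
      (SubE.le_union_of_mem (List.mem_map_of_mem (mem_dnfAnd.2 ⟨a, ha, b, hb, rfl⟩)))

theorem dnf_foldr_dnfAnd_equiv (ds : List (List (List ATy))) :
    dnf (ds.foldr dnfAnd [[]]) ≈ₑ .inter (ds.map dnf) := by
  induction ds with
  | nil => exact Equiv.union_singleton
  | cons d ds ih =>
    exact dnfAnd_equiv.trans <| (Equiv.inter_pair (.refl _) ih).trans Equiv.inter_cons.symm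

theorem dnf_flatten_equiv (ds : List (List (List ATy))) :
    dnf ds.flatten ≈ₑ .union (ds.map dnf) := by
  constructor
  · refine .unionCopair <| List.forall_mem_map.2 fun a ha => ?_
    obtain ⟨d, hd, ha⟩ := List.mem_flatten.1 ha
    exact (SubE.le_union_of_mem (List.mem_map_of_mem ha)).trans
      (SubE.le_union_of_mem (List.mem_map_of_mem hd))
  · refine .unionCopair <| List.forall_mem_map.2 fun d hd => ?_
    refine .union_mono <| List.forall_mem_map.2 fun a ha => ?_
    exact ⟨_, List.mem_map_of_mem (List.mem_flatten.2 ⟨d, hd, ha⟩), .refl _⟩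

theorem inter_map_arrow_equiv (B : ATy) :
    .inter (d.map fun a => .arrow (.inter a) B) ≈ₑ .arrow (dnf d) B := by
  constructor
  · have h := SubE.sup2 (l := d.map inter) (B := B)
    rwa [List.map_map] at h
  · exact .interPair <| List.forall_mem_map.2 fun a ha =>
      .arrow (SubE.le_union_of_mem (List.mem_map_of_mem ha)) (.refl B)

end Equivalences

def normalize : ATy → List (List ATy)
  | .atom a => [[.atom a]]
  | .arrow A B => [(normalize A).map fun a => .arrow (.inter a) (dnf (normalize B))]
  | .inter l => (l.map normalize).foldr dnfAnd [[]]
  | .union l => (l.map normalize).flatten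

theorem isRawDNF_normalize (A : ATy) : IsRawDNF (normalize A) := by
  induction A using normalize.induct with
  | case1 a => simpa [normalize, IsRawDNF] using IsR.atom a
  | case2 A B hB hA => rw [normalize]; exact hA.arrow hB
  | case3 l ih => rw [normalize]; exact IsRawDNF.foldr_dnfAnd (List.forall_mem_map.2 ih)
  | case4 l ih => rw [normalize]; exact IsRawDNF.flatten (List.forall_mem_map.2 ih)

theorem equiv_dnf_normalize (A : ATy) : A ≈ₑ dnf (normalize A) := by
  induction A using normalize.induct with
  | case1 a => rw [normalize]; exact (Equiv.union_singleton.trans Equiv.inter_singleton).symm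
  | case2 A B hB hA =>
    rw [normalize]
    exact (hA.arrow hB).trans <|
      (inter_map_arrow_equiv _).symm.trans Equiv.union_singleton.symm
  | case3 l ih =>
    have h := (dnf_foldr_dnfAnd_equiv (l.map normalize)).symm
    rw [List.map_map] at h
    rw [normalize]
    exact (Equiv.inter_map ih).trans h
  | case4 l ih =>
    have h := (dnf_flatten_equiv (l.map normalize)).symm
    rw [List.map_map] at h
    rw [normalize]
    exact (Equiv.union_map ih).trans h

end ATy

/-- In the extended system, every type A is equivalent to a
type T in disjunctive normal form conforming to the restricted grammar. -/
theorem dnf_equivalent :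
    ∀ A : ATy, ∃ T : ATy, IsT T ∧ SubE A T ∧ SubE T A := fun A =>
  ⟨_, (ATy.isRawDNF_normalize A).isT_dnf, (ATy.equiv_dnf_normalize A).le,
    (ATy.equiv_dnf_normalize A).ge⟩
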